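/- arXiv:2304.09146 — 6 statements merged into one kernel-verified Lean document; each statement's English description precedes it below -/
import Mathlib

section
/- Let K be a trivially valued field and ‖·‖ a seminorm on a finite-dimensional K-vector space W. If v, w ∈ W satisfy ‖v‖ < ‖w‖, then ‖v + w‖ = ‖w‖. In particular the seminorm takes only finitely many values on W (at most dim W + 1 distinct values). -/
/-! Scaling by `-1` shows `N (-v) = N v`, and then `w = (v + w) + (-v)` turns the strong triangle
inequality into the isosceles property. Since every nonzero scalar has norm `1`, each closed ball
`{v | N v ≤ r}` is a subspace; distinct values of `N` give a strictly increasing chain of balls,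
hence of dimensions in `[0, dim V]`. -/

theorem map_add_eq_right_of_lt {G : Type*} [AddGroup G] {N : G → ℝ}
    (hneg : ∀ v, N (-v) = N v) (hadd : ∀ v w, N (v + w) ≤ max (N v) (N w))
    {v w : G} (h : N v < N w) : N (v + w) = N w := by
  refine le_antisymm ((hadd v w).trans_eq (max_eq_right h.le)) ?_
  have hw : N w ≤ max (N (-v)) (N (v + w)) := by
    simpa only [neg_add_cancel_left] using hadd (-v) (v + w)
  rw [hneg] at hw
  exact (le_max_iff.mp hw).resolve_left h.not_ge

theorem StrictMono.finite_and_card_le_finrank_add_one {K V α : Type*}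
    [DivisionRing K] [AddCommGroup V] [Module K V] [FiniteDimensional K V] [LinearOrder α]
    {f : α → Submodule K V} (hf : StrictMono f) :
    Finite α ∧ Nat.card α ≤ Module.finrank K V + 1 := by
  let d : α → Fin (Module.finrank K V + 1) := fun a =>
    ⟨Module.finrank K (f a), Nat.lt_succ_of_le (Submodule.finrank_le _)⟩
  have hd : StrictMono d := fun a b hab => Submodule.finrank_lt_finrank_of_lt (hf hab)
  exact ⟨Finite.of_injective d hd.injective,
    (Nat.card_le_card_of_injective d hd.injective).trans_eq (Nat.card_fin _)⟩

section TrivialValuation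

variable {K V : Type*} [NormedField K] [AddCommGroup V] [Module K V] {N : V → ℝ}

theorem map_zero_of_map_smul (hsmul : ∀ (c : K) (v : V), N (c • v) = ‖c‖ * N v) : N 0 = 0 := by
  simpa using hsmul 0 0

theorem map_neg_of_map_smul (hsmul : ∀ (c : K) (v : V), N (c • v) = ‖c‖ * N v) (v : V) :
    N (-v) = N v := by
  simpa using hsmul (-1) v

theorem nonneg_of_map_smul_of_map_add_le_max (hsmul : ∀ (c : K) (v : V), N (c • v) = ‖c‖ * N v)
    (hadd : ∀ v w, N (v + w) ≤ max (N v) (N w)) (v : V) : 0 ≤ N v := by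
  have h := hadd v (-v)
  rwa [add_neg_cancel, map_zero_of_map_smul hsmul, map_neg_of_map_smul hsmul, max_self] at h

def closedBallSubmodule (htriv : ∀ x : K, x ≠ 0 → ‖x‖ = 1)
    (hsmul : ∀ (c : K) (v : V), N (c • v) = ‖c‖ * N v)
    (hadd : ∀ v w, N (v + w) ≤ max (N v) (N w)) (r : ℝ) (hr : 0 ≤ r) : Submodule K V where
  carrier := {v | N v ≤ r}
  add_mem' {a b} ha hb := (hadd a b).trans (max_le ha hb)
  zero_mem' := (map_zero_of_map_smul hsmul).trans_le hr
  smul_mem' c v (hv : N v ≤ r) := show N (c • v) ≤ r by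
    rw [hsmul]
    rcases eq_or_ne c 0 with rfl | hc
    · rwa [norm_zero, zero_mul]
    · rwa [htriv c hc, one_mul]

theorem closedBallSubmodule_lt_of_lt (htriv : ∀ x : K, x ≠ 0 → ‖x‖ = 1)
    (hsmul : ∀ (c : K) (v : V), N (c • v) = ‖c‖ * N v)
    (hadd : ∀ v w, N (v + w) ≤ max (N v) (N w)) {r : ℝ} (hr : 0 ≤ r) {w : V} (h : r < N w) :
    closedBallSubmodule htriv hsmul hadd r hr <
      closedBallSubmodule htriv hsmul hadd (N w) (hr.trans h.le) :=
  SetLike.lt_iff_le_and_exists.mpr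
    ⟨fun _ hv => le_trans hv h.le, w, le_refl (N w), h.not_ge⟩

end TrivialValuation

theorem seminorm_trivial_valuation_values_general
    {K V : Type*} [NormedField K] [AddCommGroup V] [Module K V]
    [FiniteDimensional K V]
    (htriv : ∀ x : K, x ≠ 0 → ‖x‖ = 1)
    (N : V → ℝ)
    (hsmul : ∀ (c : K) (v : V), N (c • v) = ‖c‖ * N v)
    (hadd : ∀ v w, N (v + w) ≤ max (N v) (N w)) :
    (∀ v w : V, N v < N w → N (v + w) = N w) ∧
    (Set.range N).Finite ∧ Nat.card (Set.range N) ≤ Module.finrank K V + 1 := by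
  have hnonneg : ∀ r ∈ Set.range N, 0 ≤ r :=
    Set.forall_mem_range.mpr (nonneg_of_map_smul_of_map_add_le_max hsmul hadd)
  let ball : Set.range N → Submodule K V := fun r =>
    closedBallSubmodule htriv hsmul hadd r (hnonneg r r.2)
  have hball : StrictMono ball := by
    rintro r ⟨_, w, rfl⟩ hlt
    exact closedBallSubmodule_lt_of_lt htriv hsmul hadd _ hlt
  obtain ⟨hfin, hcard⟩ := hball.finite_and_card_le_finrank_add_one
  exact ⟨fun v w => map_add_eq_right_of_lt (map_neg_of_map_smul hsmul) hadd,
    Set.finite_coe_iff.mp hfin, hcard⟩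

/-- Over a trivially valued field, a seminorm on a finite-dimensional vector
space satisfies: if `N v < N w` then `N (v + w) = N w`; in particular `N` takes
only finitely many values, at most `dim V + 1` many. -/
theorem seminorm_trivial_valuation_values
    {K V : Type*} [NormedField K] [AddCommGroup V] [Module K V]
    [FiniteDimensional K V]
    (htriv : ∀ x : K, x ≠ 0 → ‖x‖ = 1)
    (N : V → ℝ)
    (hnonneg : ∀ v, 0 ≤ N v)
    (hsmul : ∀ (c : K) (v : V), N (c • v) = ‖c‖ * N v)
    (hadd : ∀ v w, N (v + w) ≤ max (N v) (N w)) :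
    (∀ v w : V, N v < N w → N (v + w) = N w) ∧
    (Set.range N).Finite ∧ Nat.card (Set.range N) ≤ Module.finrank K V + 1 :=
  seminorm_trivial_valuation_values_general htriv N hsmul hadd
end

section
/- Let K be a field with a non-Archimedean valuation val: K → ℝ ∪ {∞}, and let v₀,…,v_r, w₀,…,w_r ∈ K^{r+1}. Then val(det(v₀,…,v_r)) + val(det(w₀,…,w_r)) ≥ min over i = 0,…,r of [val(det(v₀,…,v_{i-1},w₀,v_{i+1},…,v_r)) + val(det(v_i,w₁,…,w_r))]. (Valuated Grassmann–Plücker inequality.) -/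
private lemma val_sum_ge {K : Type*} [Field K] {ι : Type*}
    (val : K → WithTop ℝ) (hval0 : val 0 = ⊤)
    (hvaladd : ∀ x y : K, min (val x) (val y) ≤ val (x + y))
    (s : Finset ι) (hs : s.Nonempty) (f : ι → K) :
    s.inf' hs (fun i => val (f i)) ≤ val (∑ i ∈ s, f i) := by
  induction hs using Finset.Nonempty.cons_induction with
  | singleton i => simp
  | cons i s hi hs ih =>
    rw [Finset.sum_cons, Finset.inf'_cons hs]
    exact le_trans (min_le_min (le_refl _) ih) (hvaladd _ _)

/-- The valuated Grassmann–Plücker inequality: for a non-Archimedean valuation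
`val` on a field `K` and vectors `v₀,…,v_r, w₀,…,w_r ∈ K^{r+1}`,
`val(det v) + val(det w) ≥ minᵢ [val(det(v with column i replaced by w₀)) +
val(det(w with column 0 replaced by vᵢ))]`. -/
theorem valuated_grassmann_plucker {K : Type*} [Field K] (r : ℕ)
    (val : K → WithTop ℝ)
    (hval0 : val 0 = ⊤) (hval1 : val 1 = 0)
    (hvalmul : ∀ x y : K, val (x * y) = val x + val y)
    (hvaladd : ∀ x y : K, min (val x) (val y) ≤ val (x + y))
    (v w : Fin (r + 1) → Fin (r + 1) → K) :
    Finset.univ.inf' Finset.univ_nonempty (fun i : Fin (r + 1) =>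
        val (Matrix.det (Matrix.of fun a b => Function.update v i (w 0) b a)) +
        val (Matrix.det (Matrix.of fun a b => Function.update w 0 (v i) b a)))
      ≤ val (Matrix.det (Matrix.of fun a b => v b a)) +
        val (Matrix.det (Matrix.of fun a b => w b a)) := by
  set V : Matrix (Fin (r+1)) (Fin (r+1)) K := Matrix.of fun a b => v b a with hV
  set W : Matrix (Fin (r+1)) (Fin (r+1)) K := Matrix.of fun a b => w b a with hW
  have hVcol : ∀ i, (Matrix.of fun a b => Function.update v i (w 0) b a)
      = V.updateCol i (w 0) := by
    intro i
    ext a b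
    simp only [Matrix.updateCol_apply, Matrix.of_apply, Function.update_apply]
    split <;> rfl
  have hWcol : ∀ i, (Matrix.of fun a b => Function.update w 0 (v i) b a)
      = W.updateCol 0 (v i) := by
    intro i
    ext a b
    simp only [Matrix.updateCol_apply, Matrix.of_apply, Function.update_apply]
    split <;> rfl
  -- Grassmann–Plücker identity
  have key : V.det * W.det
      = ∑ i : Fin (r+1), (V.updateCol i (w 0)).det * (W.updateCol 0 (v i)).det := by
    have h1 : ∀ i, (V.updateCol i (w 0)).det = Matrix.cramer V (w 0) i := by
      intro i; rw [Matrix.cramer_apply]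
    have h2 : ∀ i, (W.updateCol 0 (v i)).det = Matrix.cramer W (v i) 0 := by
      intro i; rw [Matrix.cramer_apply]
    simp only [h1, h2]
    have lin : ∑ i : Fin (r+1), Matrix.cramer V (w 0) i * Matrix.cramer W (v i) 0
        = Matrix.cramer W (∑ i : Fin (r+1), Matrix.cramer V (w 0) i • v i) 0 := by
      rw [map_sum]
      simp only [Finset.sum_apply]
      congr 1
      ext i
      rw [LinearMap.map_smul]
      simp [mul_comm]
    rw [lin]
    have hmv : (∑ i : Fin (r+1), Matrix.cramer V (w 0) i • v i)
        = Matrix.mulVec V (Matrix.cramer V (w 0)) := by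
      ext a
      simp [Matrix.mulVec, dotProduct, hV, mul_comm]
    rw [hmv, Matrix.mulVec_cramer, LinearMap.map_smul]
    simp only [Pi.smul_apply, smul_eq_mul, Matrix.cramer_apply]
    have : W.updateCol 0 (w 0) = W := by
      have := Matrix.updateCol_eq_self W (0 : Fin (r+1))
      convert this using 2
      rfl
    rw [this]
  calc Finset.univ.inf' Finset.univ_nonempty (fun i : Fin (r + 1) =>
        val (Matrix.det (Matrix.of fun a b => Function.update v i (w 0) b a)) +
        val (Matrix.det (Matrix.of fun a b => Function.update w 0 (v i) b a)))
      = Finset.univ.inf' Finset.univ_nonempty (fun i : Fin (r+1) =>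
          val ((V.updateCol i (w 0)).det * (W.updateCol 0 (v i)).det)) := by
        congr 1
        ext i
        rw [hVcol, hWcol, hvalmul]
    _ ≤ val (∑ i : Fin (r+1), (V.updateCol i (w 0)).det * (W.updateCol 0 (v i)).det) :=
        val_sum_ge val hval0 hvaladd _ _ _
    _ = val (V.det * W.det) := by rw [key]
    _ = _ := by rw [hvalmul]
end

section
/- Let K be a valued field, f₀,…,fₙ a spanning family of K^{r+1}, and define v(A) = val(det[f_{a₀} | ⋯ | f_{a_r}]) for each (r+1)-subset A = {a₀ < ⋯ < a_r} of {0,…,n}. Then v is a valuated matroid: (i) v(A) ≠ ∞ for some A; (ii) for all (r+1)-subsets A, B and all a ∈ A \ B, v(A) + v(B) ≥ min over b ∈ B of [v((A \ {a}) ∪ {b}) + v((B \ {b}) ∪ {a})]. -/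
section AuxLemmas

variable {K : Type*} [Field K] {val : K → WithTop ℝ}

lemma valuedGP_val_neg (hval1 : val 1 = 0) (hvalmul : ∀ x y : K, val (x * y) = val x + val y)
    (x : K) : val (-x) = val x := by
  have h : val (-1 : K) + val (-1 : K) = 0 := by
    rw [← hvalmul, neg_one_mul, neg_neg, hval1]
  have h2 : val (-1 : K) = 0 := by
    cases hv : val (-1 : K) with
    | top => rw [hv] at h; simp at h
    | coe a =>
      rw [hv] at h
      have ha : a + a = 0 := by exact_mod_cast h
      have : a = 0 := by linarith
      simp [this]
  rw [show -x = -1 * x by ring, hvalmul, h2, zero_add]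

lemma valuedGP_val_ne_top (hval1 : val 1 = 0) (hvalmul : ∀ x y : K, val (x * y) = val x + val y)
    {x : K} (hx : x ≠ 0) : val x ≠ ⊤ := by
  intro h
  have : val (x * x⁻¹) = val x + val x⁻¹ := hvalmul _ _
  rw [mul_inv_cancel₀ hx, hval1, h, top_add] at this
  exact (by simp : (0 : WithTop ℝ) ≠ ⊤) this

lemma valuedGP_val_sum (hvaladd : ∀ x y : K, min (val x) (val y) ≤ val (x + y))
    {ι : Type*} (s : Finset ι) (hs : s.Nonempty) (g : ι → K) :
    s.inf' hs (fun i => val (g i)) ≤ val (∑ i ∈ s, g i) := by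
  induction hs using Finset.Nonempty.cons_induction with
  | singleton i => simp
  | cons i s hi hs ih =>
    rw [Finset.sum_cons, Finset.inf'_cons hs]
    refine le_trans ?_ (hvaladd _ _)
    exact min_le_min le_rfl ih

open Matrix in
/-- The one-column Grassmann–Plücker (exchange) identity. -/
lemma valuedGP_key_identity {R : Type*} [CommRing R] {m : ℕ}
    (M N : Matrix (Fin m) (Fin m) R) (k : Fin m) :
    M.det * N.det = ∑ j : Fin m, (M.updateCol k (fun i => N i j)).det *
      (N.updateCol j (fun i => M i k)).det := by
  have h1 : ∀ j, (M.updateCol k fun i => N i j).det = (adjugate M * N) k j := by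
    intro j
    rw [← cramer_apply, cramer_eq_adjugate_mulVec]
    rfl
  have h2 : ∀ j, (N.updateCol j fun i => M i k).det = (adjugate N * M) j k := by
    intro j
    rw [← cramer_apply, cramer_eq_adjugate_mulVec]
    rfl
  simp_rw [h1, h2]
  rw [← Matrix.mul_apply]
  have h3 : (adjugate M * N) * (adjugate N * M)
      = N.det • (M.det • (1 : Matrix (Fin m) (Fin m) R)) := by
    calc (adjugate M * N) * (adjugate N * M) = adjugate M * (N * adjugate N) * M := by
          noncomm_ring
      _ = adjugate M * (N.det • 1) * M := by rw [mul_adjugate]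
      _ = N.det • (adjugate M * M) := by simp [Matrix.mul_smul, Matrix.smul_mul]
      _ = N.det • (M.det • 1) := by rw [adjugate_mul]
  rw [h3]
  simp [mul_comm]

end AuxLemmas

/-- The value `val(det[f_a | a ∈ A])` associated to an `(r+1)`-subset `A` of
column indices of the family `f`, with the convention that subsets of the
wrong cardinality get value `∞`. -/
noncomputable def valMat {K : Type*} [Field K] {n r : ℕ} (val : K → WithTop ℝ)
    (f : Fin (n + 1) → Fin (r + 1) → K) (A : Finset (Fin (n + 1))) : WithTop ℝ :=
  if hA : A.card = r + 1 then
    val (Matrix.det (Matrix.of fun i j => f (A.orderIsoOfFin hA j).1 i))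
  else ⊤

/-- If `g` is an injective enumeration of the `(r+1)`-subset `C`, the valuation of the
determinant of the columns `f ∘ g` equals `valMat val f C`. -/
lemma valuedGP_val_det_reorder {K : Type*} [Field K] {val : K → WithTop ℝ}
    (hval1 : val 1 = 0) (hvalmul : ∀ x y : K, val (x * y) = val x + val y)
    {n r : ℕ} (f : Fin (n + 1) → Fin (r + 1) → K) (C : Finset (Fin (n + 1)))
    (hC : C.card = r + 1) (g : Fin (r + 1) → Fin (n + 1)) (hg : Function.Injective g)
    (hmem : ∀ j, g j ∈ C) :
    val (Matrix.det (Matrix.of fun i j => f (g j) i)) = valMat val f C := by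
  set e := C.orderIsoOfFin hC with he
  have hg' : Function.Injective (fun j => e.symm ⟨g j, hmem j⟩) := by
    intro a b hab
    apply hg
    have := congrArg e hab
    simpa using congrArg Subtype.val this
  let σ : Equiv.Perm (Fin (r + 1)) :=
    Equiv.ofBijective _ (Finite.injective_iff_bijective.mp hg')
  have hge : ∀ j, g j = (e (σ j)).1 := by
    intro j
    simp [σ, Equiv.ofBijective_apply]
  have hmat : (Matrix.of fun i j => f (g j) i) =
      (Matrix.of fun i j => f (e j).1 i).submatrix id σ := by
    ext i j
    simp [Matrix.submatrix_apply, hge j]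
  rw [hmat, Matrix.det_permute']
  rw [valMat, dif_pos hC]
  rcases Int.units_eq_one_or (Equiv.Perm.sign σ) with h | h <;> rw [h] <;> push_cast
  · rw [one_mul]
  · rw [neg_one_mul, valuedGP_val_neg hval1 hvalmul]

/-- The function `A ↦ val(det[f_a | a ∈ A])` associated to a spanning family
`f₀,…,fₙ` of `K^{r+1}` is a valuated matroid: it is not identically `∞` and it
satisfies the valuated basis exchange property. -/
theorem realizable_is_valuated_matroid {K : Type*} [Field K] (n r : ℕ)
    (val : K → WithTop ℝ)
    (hval0 : val 0 = ⊤) (hval1 : val 1 = 0)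
    (hvalmul : ∀ x y : K, val (x * y) = val x + val y)
    (hvaladd : ∀ x y : K, min (val x) (val y) ≤ val (x + y))
    (f : Fin (n + 1) → Fin (r + 1) → K)
    (hspan : Submodule.span K (Set.range f) = ⊤) :
    (∃ A : Finset (Fin (n + 1)), A.card = r + 1 ∧ valMat val f A ≠ ⊤) ∧
    (∀ A B : Finset (Fin (n + 1)), A.card = r + 1 → (hB : B.card = r + 1) →
      ∀ a ∈ A, a ∉ B →
        B.inf' (Finset.card_pos.mp (by omega))
            (fun b => valMat val f (insert b (A.erase a)) +
              valMat val f (insert a (B.erase b)))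
          ≤ valMat val f A + valMat val f B) := by
  classical
  constructor
  · -- Part (i): existence of a subset with finite value
    obtain ⟨b, hbsub, hbspan, hbli⟩ := exists_linearIndependent K (Set.range f)
    rw [hspan] at hbspan
    have hbfin : b.Finite := hbli.setFinite
    haveI : Fintype b := hbfin.fintype
    have hbasis : Module.Basis b K (Fin (r + 1) → K) :=
      Module.Basis.mk hbli (by rw [Subtype.range_coe]; exact hbspan.ge)
    have hcard : Fintype.card b = r + 1 := by
      have := Module.finrank_eq_card_basis hbasis
      rw [Module.finrank_fin_fun] at this
      omega
    have hchoice : ∀ x : b, ∃ a : Fin (n + 1), f a = (x : Fin (r + 1) → K) :=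
      fun x => hbsub x.2
    choose φ hφ using hchoice
    have hφinj : Function.Injective φ := by
      intro x y hxy
      exact Subtype.ext (by rw [← hφ x, ← hφ y, hxy])
    refine ⟨Finset.univ.image φ, ?_, ?_⟩
    · rw [Finset.card_image_of_injective _ hφinj, Finset.card_univ, hcard]
    · set A := Finset.univ.image φ with hAdef
      have hA : A.card = r + 1 := by
        rw [hAdef, Finset.card_image_of_injective _ hφinj, Finset.card_univ, hcard]
      rw [valMat, dif_pos hA]
      set v : Fin (r + 1) → (Fin (r + 1) → K) := fun j => f (A.orderIsoOfFin hA j).1 with hv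
      have hfA : ∀ a ∈ A, f a ∈ b := by
        intro a haA
        rw [hAdef] at haA
        obtain ⟨x, -, rfl⟩ := Finset.mem_image.mp haA
        rw [hφ x]; exact x.2
      have hfinjA : ∀ a₁ ∈ A, ∀ a₂ ∈ A, f a₁ = f a₂ → a₁ = a₂ := by
        intro a₁ h₁ a₂ h₂ h
        rw [hAdef] at h₁ h₂
        obtain ⟨x₁, -, rfl⟩ := Finset.mem_image.mp h₁
        obtain ⟨x₂, -, rfl⟩ := Finset.mem_image.mp h₂
        rw [hφ x₁, hφ x₂] at h
        exact congrArg φ (Subtype.ext h)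
      set w : Fin (r + 1) → b := fun j => ⟨v j, hfA _ (A.orderIsoOfFin hA j).2⟩ with hw
      have hwinj : Function.Injective w := by
        intro j₁ j₂ h
        have h1 : v j₁ = v j₂ := congrArg Subtype.val h
        have h2 := hfinjA _ (A.orderIsoOfFin hA j₁).2 _ (A.orderIsoOfFin hA j₂).2 h1
        exact (A.orderIsoOfFin hA).injective (Subtype.ext h2)
      have hwsurj : Function.Surjective w := by
        have : Function.Bijective w := (Fintype.bijective_iff_injective_and_card w).mpr
          ⟨hwinj, by simp [hcard]⟩
        exact this.2
      have hvli : LinearIndependent K v := hbli.comp w hwinj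
      have hvspan : Submodule.span K (Set.range v) = ⊤ := by
        have hr : Set.range v = b := by
          ext x
          constructor
          · rintro ⟨j, rfl⟩; exact (w j).2
          · intro hx
            obtain ⟨j, hj⟩ := hwsurj ⟨x, hx⟩
            exact ⟨j, congrArg Subtype.val hj⟩
        rw [hr, hbspan]
      have hun := (Module.Basis.is_basis_iff_det (Pi.basisFun K (Fin (r + 1)))).mp ⟨hvli, hvspan⟩
      have hdet : (Pi.basisFun K (Fin (r + 1))).det v =
          Matrix.det (Matrix.of fun i j => f (A.orderIsoOfFin hA j).1 i) := by
        rw [Module.Basis.det_apply]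
        congr 1
      rw [hdet] at hun
      exact valuedGP_val_ne_top hval1 hvalmul hun.ne_zero
  · -- Part (ii): the exchange inequality
    intro A B hA hB a haA haB
    set M : Matrix (Fin (r + 1)) (Fin (r + 1)) K :=
      Matrix.of fun i j => f (A.orderIsoOfFin hA j).1 i with hM
    set N : Matrix (Fin (r + 1)) (Fin (r + 1)) K :=
      Matrix.of fun i j => f (B.orderIsoOfFin hB j).1 i with hN
    set k : Fin (r + 1) := (A.orderIsoOfFin hA).symm ⟨a, haA⟩ with hk
    set bf : Fin (r + 1) → Fin (n + 1) := fun j => (B.orderIsoOfFin hB j).1 with hbf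
    have hMk : ∀ i, M i k = f a i := by
      intro i
      show f ((A.orderIsoOfFin hA) ((A.orderIsoOfFin hA).symm ⟨a, haA⟩)).1 i = f a i
      rw [OrderIso.apply_symm_apply]
    have hbfB : ∀ j, bf j ∈ B := fun j => (B.orderIsoOfFin hB j).2
    have hbfa : ∀ j, bf j ≠ a := fun j h => haB (h ▸ hbfB j)
    -- Claim 1
    have hClaim1 : ∀ j, val ((M.updateCol k (fun i => N i j)).det) =
        valMat val f (insert (bf j) (A.erase a)) := by
      intro j
      by_cases hbA : bf j ∈ A
      · -- degenerate case: repeated column on the left, too-small set on the right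
        have hmem' : bf j ∈ A.erase a := Finset.mem_erase.mpr ⟨hbfa j, hbA⟩
        have hins : insert (bf j) (A.erase a) = A.erase a := Finset.insert_eq_self.mpr hmem'
        have hcard' : (insert (bf j) (A.erase a)).card = r := by
          rw [hins, Finset.card_erase_of_mem haA, hA]
          omega
        have hne : (insert (bf j) (A.erase a)).card ≠ r + 1 := by omega
        rw [valMat, dif_neg hne]
        set k' : Fin (r + 1) := (A.orderIsoOfFin hA).symm ⟨bf j, hbA⟩ with hk'
        have hkk' : k ≠ k' := by
          intro h
          apply hbfa j
          have := congrArg (A.orderIsoOfFin hA) h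
          rw [hk, hk'] at this
          simpa using (congrArg Subtype.val this).symm
        have hdet0 : (M.updateCol k (fun i => N i j)).det = 0 := by
          apply Matrix.det_zero_of_column_eq hkk'
          intro i
          rw [Matrix.updateCol_apply, Matrix.updateCol_apply, if_pos rfl,
            if_neg (fun h => hkk' h.symm)]
          show f (bf j) i = f ((A.orderIsoOfFin hA) ((A.orderIsoOfFin hA).symm ⟨bf j, hbA⟩)).1 i
          rw [OrderIso.apply_symm_apply]
        rw [hdet0, hval0]
      · -- generic case: reorder columns
        have hcard' : (insert (bf j) (A.erase a)).card = r + 1 := by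
          rw [Finset.card_insert_of_notMem (fun h => hbA (Finset.mem_of_mem_erase h)),
            Finset.card_erase_of_mem haA, hA]
          omega
        set g : Fin (r + 1) → Fin (n + 1) :=
          fun j' => if j' = k then bf j else (A.orderIsoOfFin hA j').1 with hg
        have hmat : M.updateCol k (fun i => N i j) = Matrix.of fun i j' => f (g j') i := by
          ext i j'
          by_cases h : j' = k <;> simp [Matrix.updateCol_apply, h, hg, hN, hM, hbf]
        have hginj : Function.Injective g := by
          intro j₁ j₂ h
          simp only [hg] at h
          by_cases h1 : j₁ = k <;> by_cases h2 : j₂ = k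
          · rw [h1, h2]
          · rw [if_pos h1, if_neg h2] at h
            exact absurd (h ▸ (A.orderIsoOfFin hA j₂).2) hbA
          · rw [if_neg h1, if_pos h2] at h
            exact absurd (h ▸ (A.orderIsoOfFin hA j₁).2) hbA
          · rw [if_neg h1, if_neg h2] at h
            exact (A.orderIsoOfFin hA).injective (Subtype.ext h)
        have hgmem : ∀ j', g j' ∈ insert (bf j) (A.erase a) := by
          intro j'
          simp only [hg]
          by_cases h : j' = k
          · rw [if_pos h]; exact Finset.mem_insert_self _ _
          · rw [if_neg h]
            apply Finset.mem_insert_of_mem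
            apply Finset.mem_erase.mpr
            refine ⟨?_, (A.orderIsoOfFin hA j').2⟩
            intro hcon
            apply h
            rw [hk]
            have hcg : (A.orderIsoOfFin hA).symm ((A.orderIsoOfFin hA) j')
                = (A.orderIsoOfFin hA).symm ⟨a, haA⟩ := congrArg _ (Subtype.ext hcon)
            simpa using hcg
        rw [hmat, valuedGP_val_det_reorder hval1 hvalmul f _ hcard' g hginj hgmem]
    -- Claim 2
    have hClaim2 : ∀ j, val ((N.updateCol j (fun i => M i k)).det) =
        valMat val f (insert a (B.erase (bf j))) := by
      intro j
      have hcard' : (insert a (B.erase (bf j))).card = r + 1 := by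
        rw [Finset.card_insert_of_notMem (fun h => haB (Finset.mem_of_mem_erase h)),
          Finset.card_erase_of_mem (hbfB j), hB]
        omega
      set g : Fin (r + 1) → Fin (n + 1) :=
        fun j' => if j' = j then a else bf j' with hg
      have hmat : N.updateCol j (fun i => M i k) = Matrix.of fun i j' => f (g j') i := by
        ext i j'
        by_cases h : j' = j <;> simp [Matrix.updateCol_apply, h, hg, hN, hbf, hMk]
      have hginj : Function.Injective g := by
        intro j₁ j₂ h
        simp only [hg] at h
        by_cases h1 : j₁ = j <;> by_cases h2 : j₂ = j
        · rw [h1, h2]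
        · rw [if_pos h1, if_neg h2] at h
          exact absurd (h ▸ rfl : bf j₂ = a) (hbfa j₂)
        · rw [if_neg h1, if_pos h2] at h
          exact absurd h (hbfa j₁)
        · rw [if_neg h1, if_neg h2] at h
          exact (B.orderIsoOfFin hB).injective (Subtype.ext h)
      have hgmem : ∀ j', g j' ∈ insert a (B.erase (bf j)) := by
        intro j'
        simp only [hg]
        by_cases h : j' = j
        · rw [if_pos h]; exact Finset.mem_insert_self _ _
        · rw [if_neg h]
          apply Finset.mem_insert_of_mem
          apply Finset.mem_erase.mpr
          refine ⟨?_, hbfB j'⟩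
          intro hcon
          exact h ((B.orderIsoOfFin hB).injective (Subtype.ext hcon))
      rw [hmat, valuedGP_val_det_reorder hval1 hvalmul f _ hcard' g hginj hgmem]
    -- Put everything together
    have hvA : valMat val f A = val M.det := by rw [valMat, dif_pos hA]
    have hvB : valMat val f B = val N.det := by rw [valMat, dif_pos hB]
    rw [hvA, hvB, ← hvalmul, valuedGP_key_identity M N k]
    refine le_trans (Finset.le_inf' Finset.univ_nonempty _ ?_)
      (valuedGP_val_sum hvaladd Finset.univ Finset.univ_nonempty _)
    intro j _
    have hterm : val ((M.updateCol k (fun i => N i j)).det *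
        (N.updateCol j (fun i => M i k)).det) =
        valMat val f (insert (bf j) (A.erase a)) + valMat val f (insert a (B.erase (bf j))) := by
      rw [hvalmul, hClaim1 j, hClaim2 j]
    rw [hterm]
    exact Finset.inf'_le _ (hbfB j)
end

section
/- Let v be a valuated matroid of rank r on ground set E. Then the valuated basis exchange axiom is equivalent to the tropical Plücker relations: for all A, B ∈ (E choose r) and a ∈ A \ B, v(A)+v(B) ≥ min_{b∈B}[v((A\{a})∪{b}) + v((B\{b})∪{a})] holds for all A, B, a if and only if for every (r+1)-subset τ and every (r−1)-subset σ of E, the minimum of {v(τ \ {j}) + v(σ ∪ {j}) : j ∈ τ \ σ} is attained at least twice (or is ∞). -/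
/-!
An exchange instance `(A, B, a)` with `a ∈ A \ B` and a Plücker instance `(τ, σ)` with a
chosen `a ∈ τ \ σ` determine each other via `τ = B ∪ {a}`, `σ = A \ {a}`; then `v(A) + v(B)`
is the Plücker term at `a`, and the exchange term at `b ∈ B` is the Plücker term at `b`.
A minimum over a finite set is attained twice exactly when every finite term is matched by
a term at least as small at some other index, and the exchange axiom supplies exactly such
a term. An exchange witness `b` cannot lie in `σ`, since then `σ ∪ {b}` has only `r`
elements and its term is `∞`.
-/

/-- The minimum of `g` over `τ` is "attained at least twice": either all
values are `∞`, or at least two distinct indices realize a finite minimum. -/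
def MinTwice {E : Type*} (τ : Finset E) (g : E → WithTop ℝ) : Prop :=
  (∀ e ∈ τ, g e = ⊤) ∨
    ∃ e₁ ∈ τ, ∃ e₂ ∈ τ, e₁ ≠ e₂ ∧ g e₁ = g e₂ ∧ g e₁ ≠ ⊤ ∧ ∀ e ∈ τ, g e₁ ≤ g e

open Finset

section MinTwice

variable {E : Type*} {τ : Finset E} {g : E → WithTop ℝ}

theorem MinTwice.exists_ne_le (h : MinTwice τ g) {a : E} (ha : a ∈ τ) (hga : g a ≠ ⊤) :
    ∃ b ∈ τ, b ≠ a ∧ g b ≤ g a := by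
  rcases h with hall | ⟨e₁, he₁, e₂, he₂, hne, heq, -, hmin⟩
  · exact absurd (hall a ha) hga
  · by_cases h₁ : e₁ = a
    · exact ⟨e₂, he₂, fun h₂ => hne (h₁.trans h₂.symm), heq ▸ hmin a ha⟩
    · exact ⟨e₁, he₁, h₁, hmin a ha⟩

theorem minTwice_of_exists_ne_le (h : ∀ a ∈ τ, g a ≠ ⊤ → ∃ b ∈ τ, b ≠ a ∧ g b ≤ g a) :
    MinTwice τ g := by
  by_cases hall : ∀ e ∈ τ, g e = ⊤
  · exact Or.inl hall
  push Not at hall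
  obtain ⟨e, he, hge⟩ := hall
  obtain ⟨a, ha, hmin⟩ := exists_min_image τ g ⟨e, he⟩
  have hga : g a ≠ ⊤ := ne_top_of_le_ne_top hge (hmin e he)
  obtain ⟨b, hb, hba, hle⟩ := h a ha hga
  exact Or.inr ⟨a, ha, b, hb, hba.symm, le_antisymm (hmin b hb) hle, hga, hmin⟩

end MinTwice

theorem exists_exchange_iff_exists_plucker {E : Type*} [DecidableEq E]
    {v : Finset E → WithTop ℝ} {τ σ : Finset E} {a : E}
    (hσ : v σ = ⊤) (haτ : a ∈ τ) (haσ : a ∉ σ)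
    (hfin : v (τ.erase a) + v (insert a σ) ≠ ⊤) :
    (∃ b ∈ τ.erase a,
        v (insert b ((insert a σ).erase a)) + v (insert a ((τ.erase a).erase b))
          ≤ v (insert a σ) + v (τ.erase a)) ↔
      ∃ b ∈ τ \ σ, b ≠ a ∧
        v (τ.erase b) + v (insert b σ) ≤ v (τ.erase a) + v (insert a σ) := by
  have hswap : ∀ b ≠ a, insert a ((τ.erase a).erase b) = τ.erase b := fun b hba => by
    rw [erase_right_comm, insert_erase (mem_erase.2 ⟨hba.symm, haτ⟩)]
  simp only [erase_insert haσ, add_comm (v (insert a σ)), mem_erase, mem_sdiff]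
  constructor
  · rintro ⟨b, ⟨hba, hbτ⟩, hle⟩
    rw [hswap b hba, add_comm] at hle
    have hbσ : b ∉ σ := fun hbσ => by
      rw [insert_eq_self.2 hbσ, hσ, add_top, top_le_iff] at hle
      exact hfin hle
    exact ⟨b, ⟨hbτ, hbσ⟩, hba, hle⟩
  · rintro ⟨b, ⟨hbτ, -⟩, hba, hle⟩
    exact ⟨b, ⟨hba, hbτ⟩, by rwa [hswap b hba, add_comm]⟩

/-- For a function `v` on `(r+1)`-subsets of `E` (with value `∞` on sets of the
wrong cardinality, and not identically `∞`), the valuated basis exchange axiom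
is equivalent to the tropical (three-term) Plücker relations: for every
`(r+2)`-subset `τ` and every `r`-subset `σ`, the minimum of
`v(τ \ {j}) + v(σ ∪ {j})` over `j ∈ τ \ σ` is attained at least twice (or is `∞`). -/
theorem exchange_iff_tropical_plucker
    {E : Type*} [DecidableEq E] (r : ℕ)
    (v : Finset E → WithTop ℝ)
    (hcard : ∀ A : Finset E, A.card ≠ r + 1 → v A = ⊤) :
    (∀ A B : Finset E, A.card = r + 1 → (hB : B.card = r + 1) →
      ∀ a ∈ A, a ∉ B →
        B.inf' (Finset.card_pos.mp (by omega))
            (fun b => v (insert b (A.erase a)) + v (insert a (B.erase b)))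
          ≤ v A + v B) ↔
    (∀ τ σ : Finset E, τ.card = r + 2 → σ.card = r →
      MinTwice (τ \ σ) (fun j => v (τ.erase j) + v (insert j σ))) := by
  constructor
  · intro hex τ σ hτ hσ
    refine minTwice_of_exists_ne_le fun a ha hfin => ?_
    obtain ⟨haτ, haσ⟩ := mem_sdiff.1 ha
    have hA : (insert a σ).card = r + 1 := by rw [card_insert_of_notMem haσ, hσ]
    have hB : (τ.erase a).card = r + 1 := by rw [card_erase_of_mem haτ, hτ]; rfl
    refine (exists_exchange_iff_exists_plucker (hcard σ (by omega)) haτ haσ hfin).1 ?_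
    exact (inf'_le_iff _).1 (hex _ _ hA hB a (mem_insert_self a σ) (notMem_erase a τ))
  · intro hP A B hA hB a haA haB
    obtain ⟨σ, haσ, rfl⟩ : ∃ σ, a ∉ σ ∧ A = insert a σ :=
      ⟨A.erase a, notMem_erase a A, (insert_erase haA).symm⟩
    obtain ⟨τ, haτ, rfl⟩ : ∃ τ, a ∈ τ ∧ B = τ.erase a :=
      ⟨insert a B, mem_insert_self a B, (erase_insert haB).symm⟩
    rcases eq_or_ne (v (τ.erase a) + v (insert a σ)) ⊤ with htop | hfin
    · rw [add_comm, htop]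
      exact le_top
    have hσ : σ.card = r := by rw [card_insert_of_notMem haσ] at hA; omega
    have hτ : τ.card = r + 2 := by rw [card_erase_of_mem haτ] at hB; omega
    refine (inf'_le_iff _).2
      ((exists_exchange_iff_exists_plucker (hcard σ (by omega)) haτ haσ hfin).2 ?_)
    exact (hP τ σ hτ hσ).exists_ne_le (mem_sdiff.2 ⟨haτ, haσ⟩) hfin
end

section
/- Let v be a valuated matroid realizing vectors f₀,…,fₙ ∈ (K^{r+1})*, let A and B be bases of the underlying matroid differing in exactly one element (A \ {a} = B \ {b}), and let u ∈ ℝ^{n+1} be a point of the tropical linear space such that both A and B are bases of the initial matroid at u. Then the seminorm diagonalized by A with weights (u_i)_{i∈A} equals the seminorm diagonalized by B with weights (u_j)_{j∈B}; i.e., for every w ∈ (K^{r+1})*, min over the A-expansion equals min over the B-expansion: writing w = Σ_{i∈A} αᵢfᵢ = Σ_{j∈B} βⱼfⱼ, we have min_{i∈A}(val(αᵢ) + u_i) = min_{j∈B}(val(βⱼ) + u_j). -/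
section helpers
variable {K : Type*} [Field K] (val : K → WithTop ℝ)
  (hval1 : val 1 = 0) (hvalmul : ∀ x y : K, val (x * y) = val x + val y)

include hval1 hvalmul in
lemma val_neg' (x : K) : val (-x) = val x := by
  have h1 : val (-1 : K) + val (-1 : K) = 0 := by
    rw [← hvalmul, neg_one_mul, neg_neg, hval1]
  have h2 : val (-1 : K) = 0 := by
    cases h : val (-1 : K) with
    | top => rw [h] at h1; simp at h1
    | coe t =>
      rw [h, ← WithTop.coe_add, ← WithTop.coe_zero, WithTop.coe_inj] at h1
      rw [← WithTop.coe_zero, WithTop.coe_inj]; linarith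
  rw [← neg_one_mul, hvalmul, h2, zero_add]

variable {n r : ℕ} (f : Fin (n + 1) → Fin (r + 1) → K)

include hval1 hvalmul in
lemma valMat_eq_of_cols (σ : Finset (Fin (n + 1))) (hσ : σ.card = r + 1)
    (ι : Fin (r + 1) → Fin (n + 1)) (hinj : Function.Injective ι)
    (hmem : ∀ j, ι j ∈ σ) :
    valMat val f σ = val (Matrix.det (Matrix.of fun i j => f (ι j) i)) := by
  rw [valMat, dif_pos hσ]
  set ord := σ.orderIsoOfFin hσ with hord
  have hebij : Function.Bijective (fun j => ord.symm ⟨ι j, hmem j⟩) := by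
    rw [← Finite.injective_iff_bijective]
    intro x y hxy
    apply hinj
    have := congrArg (fun z => ((ord z : {x // x ∈ σ}) : Fin (n+1))) hxy
    simpa using this
  set e : Equiv.Perm (Fin (r + 1)) := Equiv.ofBijective _ hebij with he
  have hcol : ∀ j, ι j = (ord (e j) : Fin (n + 1)) := by
    intro j
    have : e j = ord.symm ⟨ι j, hmem j⟩ := rfl
    rw [this]; simp
  have hmat : (Matrix.of fun i j => f (ι j) i) =
      (Matrix.of fun i j => f (ord j : Fin (n+1)) i).submatrix id ⇑e := by
    ext i j; simp [Matrix.submatrix, hcol j]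
  rw [hmat, Matrix.det_permute']
  rcases Int.units_eq_one_or (Equiv.Perm.sign e) with hs | hs <;> rw [hs]
  · norm_num
  · push_cast
    rw [neg_one_mul, val_neg' val hval1 hvalmul]

lemma sum_eq_mulVec (A : Finset (Fin (n + 1))) (hA : A.card = r + 1)
    (g : Fin (n + 1) → K) :
    (∑ i ∈ A, g i • f i) =
      (Matrix.of fun i j => f (A.orderIsoOfFin hA j : Fin (n+1)) i).mulVec
        (fun j => g (A.orderIsoOfFin hA j : Fin (n+1))) := by
  funext i
  rw [Matrix.mulVec, Finset.sum_apply]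
  rw [← Finset.sum_coe_sort A, ← Equiv.sum_comp (A.orderIsoOfFin hA).toEquiv
    (fun x : {x // x ∈ A} => (g (x : Fin (n+1)) • f (x : Fin (n+1))) i)]
  simp [dotProduct, mul_comm]

end helpers

lemma glue_le
    {K : Type*} [Field K] (n r : ℕ)
    (val : K → WithTop ℝ)
    (hval0 : val 0 = ⊤) (hval1 : val 1 = 0)
    (hvalmul : ∀ x y : K, val (x * y) = val x + val y)
    (hvaladd : ∀ x y : K, min (val x) (val y) ≤ val (x + y))
    (f : Fin (n + 1) → Fin (r + 1) → K)
    (u : Fin (n + 1) → ℝ)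
    (A B : Finset (Fin (n + 1))) (hA : A.card = r + 1) (hB : B.card = r + 1)
    (hAbase : valMat val f A ≠ ⊤)
    (a : Fin (n + 1)) (b : Fin (n + 1)) (haA : a ∈ A) (hbB : b ∈ B)
    (hbA : b ∉ A) (hdiff : A.erase a = B.erase b)
    (hinitA : ∀ σ : Finset (Fin (n + 1)), σ.card = r + 1 →
      valMat val f A + ((∑ i ∈ σ, u i : ℝ) : WithTop ℝ) ≤
        valMat val f σ + ((∑ i ∈ A, u i : ℝ) : WithTop ℝ))
    (hinitB : ∀ σ : Finset (Fin (n + 1)), σ.card = r + 1 →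
      valMat val f B + ((∑ i ∈ σ, u i : ℝ) : WithTop ℝ) ≤
        valMat val f σ + ((∑ i ∈ B, u i : ℝ) : WithTop ℝ))
    (w : Fin (r + 1) → K) (α β : Fin (n + 1) → K)
    (hwA : w = (∑ i ∈ A, α i • f i)) (hwB : w = (∑ j ∈ B, β j • f j))
    (hAne : A.Nonempty) (hBne : B.Nonempty) :
    B.inf' hBne (fun j => val (β j) + (u j : WithTop ℝ)) ≤
      A.inf' hAne (fun i => val (α i) + (u i : WithTop ℝ)) := by
  classical
  set σA := A.orderIsoOfFin hA with hσA
  set M : Matrix (Fin (r+1)) (Fin (r+1)) K :=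
    Matrix.of fun i j => f (σA j : Fin (n+1)) i with hM
  have hσAA : ∀ j, (σA j : Fin (n+1)) ∈ A := fun j => (σA j).2
  have hdetA : valMat val f A = val M.det := by rw [valMat, dif_pos hA]
  -- modified coefficients
  set βA : Fin (n+1) → K := fun i => if i = a then 0 else β i with hβA
  have hsum : (∑ i ∈ A, (α i - βA i) • f i) = β b • f b := by
    have hBsum : (∑ j ∈ B, β j • f j) = (∑ i ∈ A.erase a, β i • f i) + β b • f b := by
      rw [← Finset.sum_erase_add B _ hbB, hdiff]
    have hAsum : (∑ i ∈ A, βA i • f i) = ∑ i ∈ A.erase a, β i • f i := by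
      rw [← Finset.sum_erase_add A _ haA]
      have h0 : βA a = 0 := by simp [hβA]
      rw [h0, zero_smul, add_zero]
      refine Finset.sum_congr rfl (fun x hx => ?_)
      rw [hβA]; simp [Finset.ne_of_mem_erase hx]
    have h1 : (∑ i ∈ A.erase a, β i • f i) = w - β b • f b := by
      rw [hwB, hBsum]; abel
    calc (∑ i ∈ A, (α i - βA i) • f i)
        = (∑ i ∈ A, α i • f i) - ∑ i ∈ A, βA i • f i := by
          simp [sub_smul, Finset.sum_sub_distrib]
      _ = w - (w - β b • f b) := by rw [← hwA, hAsum, h1]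
      _ = β b • f b := by abel
  have hmv : M.mulVec (fun j => α (σA j : Fin (n+1)) - βA (σA j : Fin (n+1)))
      = β b • f b := by
    have h := sum_eq_mulVec f A hA (fun i => α i - βA i)
    rw [hsum] at h
    exact h.symm
  have hc : ∀ j, M.det * (α (σA j : Fin (n+1)) - βA (σA j : Fin (n+1)))
      = β b * (M.updateCol j (f b)).det := by
    have h1 : M.det • (fun j => α (σA j : Fin (n+1)) - βA (σA j : Fin (n+1)))
        = β b • Matrix.cramer M (f b) := by
      calc M.det • (fun j => α (σA j : Fin (n+1)) - βA (σA j : Fin (n+1)))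
          = (M.det • (1 : Matrix (Fin (r+1)) (Fin (r+1)) K)).mulVec
            (fun j => α (σA j : Fin (n+1)) - βA (σA j : Fin (n+1))) := by
            rw [Matrix.smul_mulVec, Matrix.one_mulVec]
        _ = (M.adjugate * M).mulVec _ := by rw [Matrix.adjugate_mul]
        _ = M.adjugate.mulVec (M.mulVec _) := by rw [Matrix.mulVec_mulVec]
        _ = M.adjugate.mulVec (β b • f b) := by rw [hmv]
        _ = Matrix.cramer M (β b • f b) := by rw [Matrix.cramer_eq_adjugate_mulVec]
        _ = β b • Matrix.cramer M (f b) := map_smul _ _ _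
    intro j
    have h2 := congrFun h1 j
    simpa [Matrix.cramer_apply, smul_eq_mul] using h2
  -- card of the exchanged sets
  have hberase : ∀ i : Fin (n+1), b ∉ A.erase i :=
    fun i h => hbA (Finset.mem_of_mem_erase h)
  have hcard_ins : ∀ i ∈ A, (insert b (A.erase i)).card = r + 1 := by
    intro i hi
    rw [Finset.card_insert_of_notMem (hberase i), Finset.card_erase_of_mem hi, hA]
    omega
  -- val of updateColumn det
  have hσc : ∀ j, valMat val f (insert b (A.erase (σA j : Fin (n+1))))
      = val (M.updateCol j (f b)).det := by
    intro j
    set ι : Fin (r+1) → Fin (n+1) := fun j' => if j' = j then b else (σA j' : Fin (n+1))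
      with hι
    have hinj : Function.Injective ι := by
      intro x y hxy
      by_cases hx : x = j <;> by_cases hy : y = j
      · rw [hx, hy]
      · exfalso; rw [hι] at hxy; simp [hx, hy] at hxy; exact hbA (hxy ▸ hσAA y)
      · exfalso; rw [hι] at hxy; simp [hx, hy] at hxy; exact hbA (hxy.symm ▸ hσAA x)
      · rw [hι] at hxy; simp [hx, hy] at hxy
        exact hxy
    have hmem : ∀ j', ι j' ∈ insert b (A.erase (σA j : Fin (n+1))) := by
      intro j'
      rw [hι]
      by_cases h : j' = j
      · simp [h]
      · simp only [h, if_false]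
        refine Finset.mem_insert_of_mem (Finset.mem_erase.mpr ⟨?_, hσAA j'⟩)
        intro heq
        exact h (σA.injective (Subtype.ext heq))
    have hupdate : (M.updateCol j (f b)) = Matrix.of fun i j' => f (ι j') i := by
      ext i j'
      rw [Matrix.updateCol_apply]
      by_cases h : j' = j <;> simp [hι, h, hM]
    rw [hupdate, valMat_eq_of_cols val hval1 hvalmul f _
      (hcard_ins _ (hσAA j)) ι hinj hmem]
  have Cval : ∀ j, valMat val f A + val (α (σA j : Fin (n+1)) - βA (σA j : Fin (n+1)))
      = val (β b) + valMat val f (insert b (A.erase (σA j : Fin (n+1)))) := by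
    intro j
    rw [hdetA, ← hvalmul, hc j, hvalmul, hσc j]
  -- exchange equality for u-sums
  have hSA : (∑ i ∈ A, u i) = (∑ i ∈ A.erase a, u i) + u a :=
    (Finset.sum_erase_add A u haA).symm
  have hSB : (∑ i ∈ B, u i) = (∑ i ∈ A.erase a, u i) + u b := by
    rw [← Finset.sum_erase_add B u hbB, hdiff]
  have E' : valMat val f A + ((u b : ℝ) : WithTop ℝ)
      = valMat val f B + ((u a : ℝ) : WithTop ℝ) := by
    have E : valMat val f A + ((∑ i ∈ B, u i : ℝ) : WithTop ℝ)
        = valMat val f B + ((∑ i ∈ A, u i : ℝ) : WithTop ℝ) :=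
      le_antisymm (hinitA B hB) (hinitB A hA)
    rw [hSA, hSB] at E
    rw [WithTop.coe_add, WithTop.coe_add] at E
    have E2 : (valMat val f A + ((u b : ℝ) : WithTop ℝ))
          + ((∑ i ∈ A.erase a, u i : ℝ) : WithTop ℝ)
        = (valMat val f B + ((u a : ℝ) : WithTop ℝ))
          + ((∑ i ∈ A.erase a, u i : ℝ) : WithTop ℝ) := by
      calc (valMat val f A + ((u b : ℝ) : WithTop ℝ))
            + ((∑ i ∈ A.erase a, u i : ℝ) : WithTop ℝ)
          = valMat val f A + (((∑ i ∈ A.erase a, u i : ℝ) : WithTop ℝ)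
            + ((u b : ℝ) : WithTop ℝ)) := by abel
        _ = valMat val f B + (((∑ i ∈ A.erase a, u i : ℝ) : WithTop ℝ)
            + ((u a : ℝ) : WithTop ℝ)) := E
        _ = (valMat val f B + ((u a : ℝ) : WithTop ℝ))
            + ((∑ i ∈ A.erase a, u i : ℝ) : WithTop ℝ) := by abel
    exact (WithTop.add_right_inj WithTop.coe_ne_top).mp E2
  -- the pivot equality
  have eq_ab : val (α a) + ((u a : ℝ) : WithTop ℝ)
      = val (β b) + ((u b : ℝ) : WithTop ℝ) := by
    have hja : (σA (σA.symm ⟨a, haA⟩) : Fin (n+1)) = a := by simp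
    have C1 := Cval (σA.symm ⟨a, haA⟩)
    rw [hja] at C1
    have hβAa : βA a = 0 := by simp [hβA]
    rw [hβAa, sub_zero, hdiff, Finset.insert_erase hbB] at C1
    have hne : valMat val f A + ((u b : ℝ) : WithTop ℝ) ≠ ⊤ :=
      WithTop.add_ne_top.mpr ⟨hAbase, WithTop.coe_ne_top⟩
    have key : (val (α a) + ((u a : ℝ) : WithTop ℝ))
          + (valMat val f A + ((u b : ℝ) : WithTop ℝ))
        = (val (β b) + ((u b : ℝ) : WithTop ℝ))
          + (valMat val f A + ((u b : ℝ) : WithTop ℝ)) := by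
      calc (val (α a) + ((u a : ℝ) : WithTop ℝ))
            + (valMat val f A + ((u b : ℝ) : WithTop ℝ))
          = (valMat val f A + val (α a))
            + (((u a : ℝ) : WithTop ℝ) + ((u b : ℝ) : WithTop ℝ)) := by abel
        _ = (val (β b) + valMat val f B)
            + (((u a : ℝ) : WithTop ℝ) + ((u b : ℝ) : WithTop ℝ)) := by rw [C1]
        _ = (val (β b) + ((u b : ℝ) : WithTop ℝ))
            + (valMat val f B + ((u a : ℝ) : WithTop ℝ)) := by abel
        _ = (val (β b) + ((u b : ℝ) : WithTop ℝ))
            + (valMat val f A + ((u b : ℝ) : WithTop ℝ)) := by rw [E']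
    exact (WithTop.add_right_inj hne).mp key
  -- the inequality for non-pivot elements
  have ineq_c : ∀ i ∈ A, i ≠ a →
      val (β b) + ((u b : ℝ) : WithTop ℝ) ≤ val (α i - β i) + ((u i : ℝ) : WithTop ℝ) := by
    intro i hi hia
    have hji : (σA (σA.symm ⟨i, hi⟩) : Fin (n+1)) = i := by simp
    have C2 := Cval (σA.symm ⟨i, hi⟩)
    rw [hji] at C2
    have hβAi : βA i = β i := by simp [hβA, hia]
    rw [hβAi] at C2
    -- u-sum inequality for the exchanged set
    have hstep := hinitA (insert b (A.erase i)) (hcard_ins i hi)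
    rw [Finset.sum_insert (hberase i), hSA,
      show (∑ x ∈ A.erase a, u x) + u a = (∑ x ∈ A.erase i, u x) + u i by
        rw [Finset.sum_erase_add A u haA, Finset.sum_erase_add A u hi]] at hstep
    rw [WithTop.coe_add, WithTop.coe_add] at hstep
    have h1 : valMat val f A + ((u b : ℝ) : WithTop ℝ)
        ≤ valMat val f (insert b (A.erase i)) + ((u i : ℝ) : WithTop ℝ) := by
      have h2 : (valMat val f A + ((u b : ℝ) : WithTop ℝ))
            + ((∑ x ∈ A.erase i, u x : ℝ) : WithTop ℝ)
          ≤ (valMat val f (insert b (A.erase i)) + ((u i : ℝ) : WithTop ℝ))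
            + ((∑ x ∈ A.erase i, u x : ℝ) : WithTop ℝ) := by
        calc (valMat val f A + ((u b : ℝ) : WithTop ℝ))
              + ((∑ x ∈ A.erase i, u x : ℝ) : WithTop ℝ)
            = valMat val f A + (((u b : ℝ) : WithTop ℝ)
              + ((∑ x ∈ A.erase i, u x : ℝ) : WithTop ℝ)) := by abel
          _ ≤ valMat val f (insert b (A.erase i))
              + (((∑ x ∈ A.erase i, u x : ℝ) : WithTop ℝ)
              + ((u i : ℝ) : WithTop ℝ)) := hstep
          _ = (valMat val f (insert b (A.erase i)) + ((u i : ℝ) : WithTop ℝ))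
              + ((∑ x ∈ A.erase i, u x : ℝ) : WithTop ℝ) := by abel
      exact (WithTop.add_le_add_iff_right WithTop.coe_ne_top).mp h2
    have h3 : valMat val f A + (val (β b) + ((u b : ℝ) : WithTop ℝ))
        ≤ valMat val f A + (val (α i - β i) + ((u i : ℝ) : WithTop ℝ)) := by
      calc valMat val f A + (val (β b) + ((u b : ℝ) : WithTop ℝ))
          = val (β b) + (valMat val f A + ((u b : ℝ) : WithTop ℝ)) := by abel
        _ ≤ val (β b) + (valMat val f (insert b (A.erase i))
            + ((u i : ℝ) : WithTop ℝ)) := add_le_add_right h1 _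
        _ = (val (β b) + valMat val f (insert b (A.erase i)))
            + ((u i : ℝ) : WithTop ℝ) := by abel
        _ = (valMat val f A + val (α i - β i)) + ((u i : ℝ) : WithTop ℝ) := by rw [C2]
        _ = valMat val f A + (val (α i - β i) + ((u i : ℝ) : WithTop ℝ)) := by abel
    exact (WithTop.add_le_add_iff_left hAbase).mp h3
  -- conclusion
  apply Finset.le_inf'
  intro i hi
  by_cases hia : i = a
  · subst hia
    rw [eq_ab]
    exact Finset.inf'_le _ hbB
  · have hiB : i ∈ B :=
      Finset.mem_of_mem_erase (hdiff ▸ Finset.mem_erase.mpr ⟨hia, hi⟩)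
    have hmin : min (val (β i) + ((u i : ℝ) : WithTop ℝ))
        (val (α i - β i) + ((u i : ℝ) : WithTop ℝ))
        ≤ val (α i) + ((u i : ℝ) : WithTop ℝ) := by
      have := hvaladd (β i) (α i - β i)
      rw [show β i + (α i - β i) = α i by ring] at this
      calc min (val (β i) + ((u i : ℝ) : WithTop ℝ))
            (val (α i - β i) + ((u i : ℝ) : WithTop ℝ))
          = min (val (β i)) (val (α i - β i)) + ((u i : ℝ) : WithTop ℝ) :=
            min_add_add_right _ _ _
        _ ≤ val (α i) + ((u i : ℝ) : WithTop ℝ) := add_le_add_left this _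
    refine le_trans (le_min ?_ ?_) hmin
    · exact Finset.inf'_le _ hiB
    · exact le_trans (Finset.inf'_le _ hbB) (ineq_c i hi hia)

/-- Gluing lemma for the faithful tropicalization: if `A` and `B` are bases of
the realizable valuated matroid of `f₀,…,fₙ` differing in exactly one element
(`A \ {a} = B \ {b}`), and `u` is a point of the tropical linear space such that
both `A` and `B` are bases of the initial matroid at `u`, then the seminorms
diagonalized by `A` resp. `B` with weights `u` coincide: for every `w` written
as `w = ∑_{i∈A} αᵢ fᵢ = ∑_{j∈B} βⱼ fⱼ`, one has
`min_{i∈A}(val(αᵢ) + uᵢ) = min_{j∈B}(val(βⱼ) + uⱼ)`. -/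
theorem diagonalized_seminorms_glue
    {K : Type*} [Field K] (n r : ℕ)
    (val : K → WithTop ℝ)
    (hval0 : val 0 = ⊤) (hval1 : val 1 = 0)
    (hvalmul : ∀ x y : K, val (x * y) = val x + val y)
    (hvaladd : ∀ x y : K, min (val x) (val y) ≤ val (x + y))
    (f : Fin (n + 1) → Fin (r + 1) → K) (hf : ∀ i, f i ≠ 0)
    (u : Fin (n + 1) → ℝ)
    (htrop : ∀ τ : Finset (Fin (n + 1)), τ.card = r + 2 →
      MinTwice τ (fun e => valMat val f (τ.erase e) + (u e : WithTop ℝ)))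
    (A B : Finset (Fin (n + 1))) (hA : A.card = r + 1) (hB : B.card = r + 1)
    (hAbase : valMat val f A ≠ ⊤) (hBbase : valMat val f B ≠ ⊤)
    (a : Fin (n + 1)) (b : Fin (n + 1)) (haA : a ∈ A) (hbB : b ∈ B)
    (haB : a ∉ B) (hbA : b ∉ A) (hdiff : A.erase a = B.erase b)
    (hinitA : ∀ σ : Finset (Fin (n + 1)), σ.card = r + 1 →
      valMat val f A + ((∑ i ∈ σ, u i : ℝ) : WithTop ℝ) ≤
        valMat val f σ + ((∑ i ∈ A, u i : ℝ) : WithTop ℝ))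
    (hinitB : ∀ σ : Finset (Fin (n + 1)), σ.card = r + 1 →
      valMat val f B + ((∑ i ∈ σ, u i : ℝ) : WithTop ℝ) ≤
        valMat val f σ + ((∑ i ∈ B, u i : ℝ) : WithTop ℝ)) :
    ∀ (w : Fin (r + 1) → K) (α β : Fin (n + 1) → K),
      w = (∑ i ∈ A, α i • f i) → w = (∑ j ∈ B, β j • f j) →
      A.inf' (Finset.card_pos.mp (by omega))
          (fun i => val (α i) + (u i : WithTop ℝ)) =
      B.inf' (Finset.card_pos.mp (by omega))
          (fun j => val (β j) + (u j : WithTop ℝ)) := by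
  intro w α β hwA hwB
  have hAne : A.Nonempty := Finset.card_pos.mp (by omega)
  have hBne : B.Nonempty := Finset.card_pos.mp (by omega)
  exact le_antisymm
    (glue_le n r val hval0 hval1 hvalmul hvaladd f u B A hB hA hBbase b a hbB haA
      haB hdiff.symm hinitB hinitA w β α hwB hwA hBne hAne)
    (glue_le n r val hval0 hval1 hvalmul hvaladd f u A B hA hB hAbase a b haA hbB
      hbA hdiff hinitA hinitB w α β hwA hwB hAne hBne)
end

section
/- Let M be a loopless matroid of rank r+1 on E = {0,…,n}, regarded as a trivially valuated matroid (v(A) = 0 if A is a basis, ∞ otherwise). For any chain of flats ∅ ⊊ F₁ ⊊ ⋯ ⊊ F_l = E of M and any coefficients c₁ > c₂ > ⋯ > c_{l-1} > c_l = 0, the point u = Σ_{j=1}^{l-1} (c_j − c_{j+1})·e_{F_j} ∈ ℝ^{n+1} lies in the tropical linear space L(v): for every (r+2)-subset τ of E, the minimum of {v(τ\{e}) + u_e : e ∈ τ} is attained at least twice. -/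
lemma tele_sum (d : ℕ → ℝ) : ∀ b a, a ≤ b →
    ∑ i ∈ Finset.Ico a b, (d i - d (i + 1)) = d a - d b := by
  intro b
  induction b with
  | zero => intro a ha; simp [Nat.le_zero.mp ha]
  | succ b ih =>
    intro a ha
    by_cases h : a ≤ b
    · rw [Finset.sum_Ico_succ_top h, ih a h]; ring
    · have : a = b + 1 := by omega
      simp [this]

lemma matroid_aux {α : Type*} (M : Matroid α) (B : Set α) (hfin : B.Finite) (hB : M.IsBase B)
    (e₁ : α) (he₁E : e₁ ∈ M.E) (he₁ : e₁ ∉ B) (G : Set α)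
    (h : ∀ e ∈ B, e ∉ G → ¬ M.Indep (insert e₁ B \ {e})) :
    e₁ ∈ M.closure (B ∩ G) := by
  by_contra hcl
  have hIindep : M.Indep (B ∩ G) := hB.indep.inter_right G
  have hins : M.Indep (insert e₁ (B ∩ G)) :=
    (hIindep.insert_indep_iff_of_notMem (fun hm => he₁ hm.1)).mpr ⟨he₁E, hcl⟩
  have hXE : insert e₁ B ⊆ M.E := Set.insert_subset he₁E hB.subset_ground
  obtain ⟨J, hJ, hIJ⟩ := hins.subset_isBasis_of_subset
    (Set.insert_subset_insert Set.inter_subset_left) hXE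
  have hsp : M.Spanning (insert e₁ B) := hB.spanning.superset (Set.subset_insert _ _) hXE
  have hJsp : M.Spanning J := by
    rw [Matroid.spanning_iff_closure_eq (hJ.indep.subset_ground), hJ.closure_eq_closure]
    exact (Matroid.spanning_iff_closure_eq hXE).mp hsp
  have hJbase : M.IsBase J := hJ.indep.isBase_of_spanning hJsp
  have hcard : J.encard = B.encard := hJbase.encard_eq_encard_of_isBase hB
  have hJne : J ≠ insert e₁ B := by
    intro hEq
    rw [hEq, Set.encard_insert_of_notMem he₁] at hcard
    rw [hfin.encard_eq_coe_toFinset_card] at hcard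
    have : (hfin.toFinset.card : ℕ∞) + 1 = ((hfin.toFinset.card + 1 : ℕ) : ℕ∞) := by push_cast; ring
    rw [this] at hcard
    have := Nat.cast_injective hcard
    omega
  obtain ⟨e, heX, heJ⟩ := Set.exists_of_ssubset (hJ.subset.ssubset_of_ne hJne)
  have he₁J : e₁ ∈ J := hIJ (Set.mem_insert _ _)
  have heB : e ∈ B := by
    rcases heX with rfl | hb
    · exact absurd he₁J heJ
    · exact hb
  have heG : e ∉ G := fun hg => heJ (hIJ (Set.mem_insert_of_mem _ ⟨heB, hg⟩))
  have hsubJ : J ⊆ insert e₁ B \ {e} :=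
    fun x hx => ⟨hJ.subset hx, fun hxe => heJ (Set.mem_singleton_iff.mp hxe ▸ hx)⟩
  have hfin' : (insert e₁ B \ {e}).Finite := (hfin.insert e₁).diff
  have hcard' : (insert e₁ B \ {e}).encard ≤ J.encard := by
    rw [hcard, Set.encard_exchange' he₁ heB]
  have hEq : J = insert e₁ B \ {e} := hfin'.eq_of_subset_of_encard_le' hsubJ hcard'
  exact h e heB heG (hEq ▸ hJbase.indep)

/-- Bergman fan direction: for a loopless matroid `M` of rank `r+1` on
`E = {0,…,n}`, viewed as a trivially valuated matroid (`v(A) = 0` on bases and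
`∞` otherwise), any point `u = ∑_{j=1}^{l-1} (c_j − c_{j+1})·e_{F_j}` coming
from a chain of flats `∅ ⊊ F₁ ⊊ ⋯ ⊊ F_l = E` and coefficients
`c₁ > ⋯ > c_{l-1} > c_l = 0` lies in the tropical linear space `L(v)`: for
every `(r+2)`-subset `τ`, the minimum of `v(τ \ {e}) + u_e` over `e ∈ τ` is
attained at least twice. -/
theorem chain_of_flats_point_mem_tropical_linear_space
    (n r : ℕ) (M : Matroid (Fin (n + 1)))
    (hground : M.E = Set.univ)
    (hloopless : ∀ e : Fin (n + 1), M.Indep {e})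
    (hrank : ∀ S : Set (Fin (n + 1)), M.IsBase S → S.ncard = r + 1)
    (v : Finset (Fin (n + 1)) → WithTop ℝ)
    (hv0 : ∀ S : Finset (Fin (n + 1)), M.IsBase ↑S → v S = 0)
    (hvtop : ∀ S : Finset (Fin (n + 1)), ¬ M.IsBase ↑S → v S = ⊤)
    (m : ℕ) (F : Fin (m + 1) → Finset (Fin (n + 1)))
    (hchain : StrictMono F)
    (hflat : ∀ j, M.IsFlat ↑(F j))
    (hF0 : (F 0).Nonempty)
    (hFlast : F (Fin.last m) = Finset.univ)
    (c : Fin (m + 1) → ℝ)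
    (hc : StrictAnti c)
    (hclast : c (Fin.last m) = 0)
    (u : Fin (n + 1) → ℝ)
    (hu : ∀ e, u e = ∑ j : Fin m,
      (c j.castSucc - c j.succ) * (if e ∈ F j.castSucc then 1 else 0)) :
    ∀ τ : Finset (Fin (n + 1)), τ.card = r + 2 →
      MinTwice τ (fun e => v (τ.erase e) + (u e : WithTop ℝ)) := by
  classical
  -- the index of the smallest flat containing e
  have hmemlast : ∀ e, e ∈ F (Fin.last m) := by
    intro e; rw [hFlast]; exact Finset.mem_univ e
  set idxset : Fin (n + 1) → Finset (Fin (m + 1)) :=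
    fun e => Finset.univ.filter (fun j => e ∈ F j) with hidxset
  have hne : ∀ e, (idxset e).Nonempty :=
    fun e => ⟨Fin.last m, by simp [hidxset, hmemlast e]⟩
  set idx : Fin (n + 1) → Fin (m + 1) := fun e => (idxset e).min' (hne e) with hidxdef
  have hidx_mem : ∀ e, e ∈ F (idx e) :=
    fun e => (Finset.mem_filter.mp ((idxset e).min'_mem (hne e))).2
  have hidx_le : ∀ e j, e ∈ F j → idx e ≤ j :=
    fun e j hj => Finset.min'_le _ _ (by simp [hidxset, hj])
  have hmem_iff : ∀ e j, e ∈ F j ↔ idx e ≤ j := by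
    intro e j
    refine ⟨hidx_le e j, fun h => ?_⟩
    exact hchain.monotone h (hidx_mem e)
  -- u e = c (idx e)
  set d : ℕ → ℝ := fun i => if h : i ≤ m then c ⟨i, Nat.lt_succ_of_le h⟩ else 0 with hd
  have hu' : ∀ e, u e = c (idx e) := by
    intro e
    rw [hu e]
    have hstep : ∀ j : Fin m,
        (c j.castSucc - c j.succ) * (if e ∈ F j.castSucc then 1 else 0)
          = (fun i : ℕ => if (idx e : ℕ) ≤ i then d i - d (i + 1) else 0) (j : ℕ) := by
      intro j
      have h1 : d (j : ℕ) = c j.castSucc := by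
        rw [hd]; simp only
        rw [dif_pos (le_of_lt j.isLt)]
        congr 1
      have h2 : d ((j : ℕ) + 1) = c j.succ := by
        rw [hd]; simp only
        rw [dif_pos (Nat.succ_le_of_lt j.isLt)]
        congr 1
      have h3 : (e ∈ F j.castSucc) ↔ ((idx e : ℕ) ≤ (j : ℕ)) := by
        rw [hmem_iff e j.castSucc, Fin.le_def, Fin.coe_castSucc]
      show (c j.castSucc - c j.succ) * (if e ∈ F j.castSucc then 1 else 0)
          = if (idx e : ℕ) ≤ (j : ℕ) then d (j : ℕ) - d ((j : ℕ) + 1) else 0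
      by_cases hmem : e ∈ F j.castSucc
      · rw [if_pos hmem, if_pos (h3.mp hmem), h1, h2]; ring
      · rw [if_neg hmem, if_neg fun hh => hmem (h3.mpr hh)]; ring
    rw [Finset.sum_congr rfl (fun j _ => hstep j),
      Fin.sum_univ_eq_sum_range (fun i : ℕ => if (idx e : ℕ) ≤ i then d i - d (i + 1) else 0) m]
    rw [← Finset.sum_filter]
    have hfilter : (Finset.range m).filter (fun i => (idx e : ℕ) ≤ i)
        = Finset.Ico (idx e : ℕ) m := by
      ext i
      simp [Finset.mem_filter, Finset.mem_range, Finset.mem_Ico, and_comm]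
    rw [hfilter, tele_sum d m (idx e : ℕ) (Nat.lt_succ_iff.mp (idx e).isLt)]
    have hda : d (idx e : ℕ) = c (idx e) := by
      rw [hd]; simp only
      rw [dif_pos (Nat.lt_succ_iff.mp (idx e).isLt)]
    have hdm : d m = 0 := by
      rw [hd]; simp only
      rw [dif_pos le_rfl]
      rw [show (⟨m, Nat.lt_succ_of_le le_rfl⟩ : Fin (m + 1)) = Fin.last m from rfl, hclast]
    rw [hda, hdm]; ring
  intro τ hτ
  by_cases hex : ∃ e ∈ τ, M.IsBase (↑(τ.erase e) : Set (Fin (n + 1)))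
  swap
  · left
    intro e he
    push_neg at hex
    simp only
    rw [hvtop _ (hex e he), top_add]
  right
  -- the set of e such that τ \ e is a base
  set C : Finset (Fin (n + 1)) :=
    τ.filter (fun e => M.IsBase (↑(τ.erase e) : Set (Fin (n + 1)))) with hCdef
  obtain ⟨e₀, he₀τ, hB₀⟩ := hex
  have hCne : C.Nonempty := ⟨e₀, Finset.mem_filter.mpr ⟨he₀τ, hB₀⟩⟩
  -- values of g on C
  have gval : ∀ e ∈ C, v (τ.erase e) + (u e : WithTop ℝ) = ((c (idx e) : ℝ) : WithTop ℝ) := by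
    intro e he
    rw [hv0 _ (Finset.mem_filter.mp he).2, zero_add, hu' e]
  have gvaltop : ∀ e ∈ τ, e ∉ C → v (τ.erase e) + (u e : WithTop ℝ) = ⊤ := by
    intro e heτ heC
    have : ¬ M.IsBase (↑(τ.erase e) : Set (Fin (n + 1))) :=
      fun hb => heC (Finset.mem_filter.mpr ⟨heτ, hb⟩)
    rw [hvtop _ this, top_add]
  -- indep of τ.erase e implies base
  have base_of_indep : ∀ e ∈ τ, M.Indep (↑(τ.erase e) : Set (Fin (n + 1)))
      → M.IsBase (↑(τ.erase e) : Set (Fin (n + 1))) := by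
    intro e heτ hind
    obtain ⟨B', hB', hsub⟩ := hind.exists_isBase_superset
    have hcard : B'.ncard ≤ (↑(τ.erase e) : Set (Fin (n + 1))).ncard := by
      rw [hrank _ hB', Set.ncard_coe_finset, Finset.card_erase_of_mem heτ, hτ]
      omega
    have := Set.eq_of_subset_of_ncard_le hsub hcard (Set.toFinite B')
    rw [this]; exact hB'
  obtain ⟨e₁, he₁C, hmax⟩ := Finset.exists_max_image C idx hCne
  have he₁τ : e₁ ∈ τ := (Finset.mem_filter.mp he₁C).1
  by_cases h2 : ∃ e₂ ∈ C, e₂ ≠ e₁ ∧ idx e₂ = idx e₁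
  · obtain ⟨e₂, he₂C, hne2, hidx2⟩ := h2
    refine ⟨e₁, he₁τ, e₂, (Finset.mem_filter.mp he₂C).1, hne2.symm, ?_, ?_, ?_⟩
    · simp only
      rw [gval e₁ he₁C, gval e₂ he₂C, hidx2]
    · simp only
      rw [gval e₁ he₁C]
      exact WithTop.coe_ne_top
    · intro e heτ
      simp only
      rw [gval e₁ he₁C]
      by_cases heC : e ∈ C
      · rw [gval e heC]
        exact_mod_cast hc.antitone (hmax e heC)
      · rw [gvaltop e heτ heC]; exact le_top
  -- uniqueness of the maximizer: derive a contradiction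
  exfalso
  push_neg at h2
  have huniq : ∀ e ∈ C, e ≠ e₁ → idx e < idx e₁ :=
    fun e he hne => lt_of_le_of_ne (hmax e he) (h2 e he hne)
  set B : Set (Fin (n + 1)) := (↑(τ.erase e₁) : Set (Fin (n + 1))) with hBdef
  have hB₁ : M.IsBase B := (Finset.mem_filter.mp he₁C).2
  have he₁B : e₁ ∉ B := by simp [hBdef]
  have he₁E : e₁ ∈ M.E := by rw [hground]; trivial
  have hsetEq : ∀ e ∈ B, insert e₁ B \ {e} = (↑(τ.erase e) : Set (Fin (n + 1))) := by
    intro e heB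
    have heτ' : e ∈ τ.erase e₁ := heB
    have hee₁ : e ≠ e₁ := (Finset.mem_erase.mp heτ').1
    have heτ : e ∈ τ := (Finset.mem_erase.mp heτ').2
    ext x
    simp only [Set.mem_diff, Set.mem_insert_iff, Set.mem_singleton_iff, hBdef,
      Finset.coe_erase, Set.mem_diff, Finset.mem_coe]
    constructor
    · rintro ⟨hx1 | hx2, hxe⟩
      · subst hx1; exact ⟨he₁τ, hxe⟩
      · exact ⟨hx2.1, hxe⟩
    · rintro ⟨hxτ, hxe⟩
      by_cases hx1 : x = e₁
      · exact ⟨Or.inl hx1, hxe⟩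
      · exact ⟨Or.inr ⟨hxτ, hx1⟩, hxe⟩
  have hhyp : ∀ G : Set (Fin (n + 1)),
      (∀ e ∈ B, M.IsBase (↑(τ.erase e) : Set (Fin (n + 1))) → e ∈ G) →
      ∀ e ∈ B, e ∉ G → ¬ M.Indep (insert e₁ B \ {e}) := by
    intro G hG e heB heG hind
    rw [hsetEq e heB] at hind
    have heτ : e ∈ τ := (Finset.mem_erase.mp heB).2
    exact heG (hG e heB (base_of_indep e heτ hind))
  by_cases h0 : idx e₁ = 0
  · -- then C = {e₁} and e₁ is a loop: contradiction
    have key := matroid_aux M B (Set.toFinite B) hB₁ e₁ he₁E he₁B ∅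
      (hhyp ∅ ?_)
    · rw [Set.inter_empty] at key
      have hni : e₁ ∉ M.closure ∅ := by
        rw [M.empty_indep.notMem_closure_iff_of_notMem (Set.notMem_empty e₁) he₁E]
        simpa using hloopless e₁
      exact hni key
    · intro e heB hbase
      have heτ : e ∈ τ := (Finset.mem_erase.mp heB).2
      have heC : e ∈ C := Finset.mem_filter.mpr ⟨heτ, hbase⟩
      have hee₁ : e ≠ e₁ := (Finset.mem_erase.mp heB).1
      have := huniq e heC hee₁
      rw [h0] at this
      exact absurd this (by simp)
  · -- idx e₁ = p + 1: use the flat F p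
    obtain ⟨k, hk⟩ : ∃ k, (idx e₁ : ℕ) = k + 1 :=
      Nat.exists_eq_succ_of_ne_zero (fun hh => h0 (Fin.ext hh))
    have hkm : k < m + 1 := by have := (idx e₁).isLt; omega
    set p : Fin (m + 1) := ⟨k, hkm⟩ with hp
    have key := matroid_aux M B (Set.toFinite B) hB₁ e₁ he₁E he₁B (↑(F p))
      (hhyp (↑(F p)) ?_)
    · have : e₁ ∈ M.closure (↑(F p) : Set (Fin (n + 1))) :=
        M.closure_subset_closure Set.inter_subset_right key
      rw [(hflat p).closure] at this
      have hle := hidx_le e₁ p (Finset.mem_coe.mp this)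
      rw [Fin.le_def] at hle
      simp only [hp] at hle
      omega
    · intro e heB hbase
      have heτ : e ∈ τ := (Finset.mem_erase.mp heB).2
      have heC : e ∈ C := Finset.mem_filter.mpr ⟨heτ, hbase⟩
      have hee₁ : e ≠ e₁ := (Finset.mem_erase.mp heB).1
      have hlt := huniq e heC hee₁
      rw [Fin.lt_def, hk] at hlt
      have : idx e ≤ p := by rw [Fin.le_def]; simp only [hp]; omega
      exact Finset.mem_coe.mpr ((hmem_iff e p).mpr this)
end
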